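/- Let n be even and let f₁ : 𝔽₂^n → 𝔽₂ be a homogeneous cubic bent function, q₂, q₃ : 𝔽₂^n → 𝔽₂ homogeneous quadratic functions such that f₂ := f₁ + q₂, f₃ := f₁ + q₃, and f₁ + f₂ + f₃ are bent; let s : 𝔽₂^n → 𝔽₂ and f₄ := f₁ + f₂ + f₃ + s. Then the concatenation f = f₁‖f₂‖f₃‖f₄ on 𝔽₂^{n+2} is a homogeneous cubic bent function if and only if s is linear (homogeneous of degree 1 or zero) and f₁* + f₂* + f₃* = (f₁ + f₂ + f₃ + s)* + 1. -/

import Mathlib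

/-- Evaluation of an algebraic normal form with coefficients `c`. -/
def anf (n : ℕ) (c : Finset (Fin n) → ZMod 2) (x : Fin n → ZMod 2) : ZMod 2 :=
  ∑ S : Finset (Fin n), c S * ∏ i ∈ S, x i

/-- A Boolean function is homogeneous of degree `k` if it has an ANF all of whose nonzero
monomials have degree exactly `k` (the zero function is allowed). -/
def IsHomog (n k : ℕ) (f : (Fin n → ZMod 2) → ZMod 2) : Prop :=
  ∃ c : Finset (Fin n) → ZMod 2, (∀ S, c S ≠ 0 → S.card = k) ∧ ∀ x, f x = anf n c x

/-- Walsh–Hadamard transform on `𝔽₂^n`. -/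
def Wv (n : ℕ) (f : (Fin n → ZMod 2) → ZMod 2) (a : Fin n → ZMod 2) : ℤ :=
  ∑ x : Fin n → ZMod 2, (-1 : ℤ) ^ ((f x + ∑ i, x i * a i).val)

/-- Bent functions on `𝔽₂^n`. -/
def IsBent (n : ℕ) (f : (Fin n → ZMod 2) → ZMod 2) : Prop :=
  ∀ a, Wv n f a = 2 ^ (n / 2) ∨ Wv n f a = -(2 ^ (n / 2))

namespace Stmt13Aux

def em₁ (n : ℕ) : Fin n ↪ Fin (n+2) :=
  ⟨Fin.castAdd 2, show Function.Injective (Fin.castAdd 2) from fun a b h => by simpa [Fin.ext_iff] using h⟩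
def em₂ (n : ℕ) : Fin 2 ↪ Fin (n+2) :=
  ⟨Fin.natAdd n, show Function.Injective (Fin.natAdd n) from fun a b h => by simpa [Fin.ext_iff] using h⟩

noncomputable def E (n : ℕ) : Finset (Fin n) × Finset (Fin 2) ≃ Finset (Fin (n+2)) where
  toFun p := p.1.map (em₁ n) ∪ p.2.map (em₂ n)
  invFun S := (S.preimage (Fin.castAdd 2) (Set.injOn_of_injective (show Function.Injective (Fin.castAdd 2) from (em₁ n).injective)),
               S.preimage (Fin.natAdd n) (Set.injOn_of_injective (show Function.Injective (Fin.natAdd n) from (em₂ n).injective)))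
  left_inv p := by
    have h1 : ∀ (i : Fin n) (a : Fin 2), em₂ n a ≠ em₁ n i := by
      intro i a h
      have := i.isLt
      simp only [em₁, em₂, Function.Embedding.coeFn_mk, Fin.ext_iff, Fin.coe_natAdd,
        Fin.coe_castAdd] at h
      omega
    ext i
    · simp only [Finset.mem_preimage, Finset.mem_union, Finset.mem_map]
      constructor
      · rintro (⟨a, ha, h⟩ | ⟨a, ha, h⟩)
        · rwa [(em₁ n).injective h] at ha
        · exact absurd h (h1 i a)
      · intro h; exact Or.inl ⟨i, h, rfl⟩
    · simp only [Finset.mem_preimage, Finset.mem_union, Finset.mem_map]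
      constructor
      · rintro (⟨a, ha, h⟩ | ⟨a, ha, h⟩)
        · exact absurd h.symm (h1 a i)
        · rwa [(em₂ n).injective h] at ha
      · intro h; exact Or.inr ⟨i, h, rfl⟩
  right_inv S := by
    ext i
    simp only [Finset.mem_union, Finset.mem_map, Finset.mem_preimage, em₁, em₂,
      Function.Embedding.coeFn_mk]
    constructor
    · rintro (⟨a, ha, rfl⟩ | ⟨a, ha, rfl⟩) <;> exact ha
    · intro hi
      rcases lt_or_ge i.val n with h | h
      · exact Or.inl ⟨⟨i.val, h⟩, by simpa [Fin.ext_iff] using hi, by simp [Fin.ext_iff]⟩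
      · refine Or.inr ⟨⟨i.val - n, by omega⟩, ?_, by simp [Fin.ext_iff]; omega⟩
        have : (Fin.natAdd n ⟨i.val - n, by omega⟩ : Fin (n+2)) = i := by
          simp [Fin.ext_iff]; omega
        rwa [this]

lemma E_card (n : ℕ) (A : Finset (Fin n)) (B : Finset (Fin 2)) :
    (E n (A, B)).card = A.card + B.card := by
  have hd : Disjoint (A.map (em₁ n)) (B.map (em₂ n)) := by
    simp only [Finset.disjoint_left, Finset.mem_map]
    rintro x ⟨a, ha, rfl⟩ ⟨b, hb, h⟩
    have := a.isLt
    simp [em₁, em₂, Fin.ext_iff] at h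
    omega
  simp [E, Finset.card_union_of_disjoint hd]

lemma E_prod (n : ℕ) (A : Finset (Fin n)) (B : Finset (Fin 2)) (z : Fin n → ZMod 2)
    (b : Fin 2 → ZMod 2) :
    ∏ i ∈ E n (A, B), Fin.append z b i = (∏ i ∈ A, z i) * ∏ j ∈ B, b j := by
  have hd : Disjoint (A.map (em₁ n)) (B.map (em₂ n)) := by
    simp only [Finset.disjoint_left, Finset.mem_map]
    rintro x ⟨a, ha, rfl⟩ ⟨c, hc, h⟩
    have := a.isLt
    simp [em₁, em₂, Fin.ext_iff] at h
    omega
  show ∏ i ∈ A.map (em₁ n) ∪ B.map (em₂ n), Fin.append z b i = _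
  rw [Finset.prod_union hd, Finset.prod_map, Finset.prod_map]
  simp [em₁, em₂, Fin.append_left, Fin.append_right]

lemma sum_finset_fin2 {M : Type*} [AddCommMonoid M] (G : Finset (Fin 2) → M) :
    ∑ B : Finset (Fin 2), G B = G ∅ + G {0} + G {1} + G Finset.univ := by
  have h : (Finset.univ : Finset (Finset (Fin 2))) = {∅, {0}, {1}, Finset.univ} := by decide
  rw [h, Finset.sum_insert (by decide), Finset.sum_insert (by decide),
    Finset.sum_insert (by decide), Finset.sum_singleton]
  abel

lemma sum_pi_fin2 {M : Type*} [AddCommMonoid M] (H : (Fin 2 → ZMod 2) → M) :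
    ∑ b : Fin 2 → ZMod 2, H b = H ![0,0] + H ![0,1] + H ![1,0] + H ![1,1] := by
  have h : (Finset.univ : Finset (Fin 2 → ZMod 2)) = {![0,0], ![0,1], ![1,0], ![1,1]} := by decide
  rw [h, Finset.sum_insert (by decide), Finset.sum_insert (by decide),
    Finset.sum_insert (by decide), Finset.sum_singleton]
  abel

lemma anf_split (n : ℕ) (C : Finset (Fin (n+2)) → ZMod 2) (z : Fin n → ZMod 2)
    (b : Fin 2 → ZMod 2) :
    anf (n+2) C (Fin.append z b) =
      ∑ A : Finset (Fin n), ∑ B : Finset (Fin 2),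
        C (E n (A, B)) * ((∏ i ∈ A, z i) * ∏ j ∈ B, b j) := by
  rw [anf, ← Equiv.sum_comp (E n) (fun S => C S * ∏ i ∈ S, Fin.append z b i),
    Fintype.sum_prod_type]
  exact Finset.sum_congr rfl fun A _ => Finset.sum_congr rfl fun B _ => by
    rw [E_prod]

def ptE (n : ℕ) : ((Fin n → ZMod 2) × (Fin 2 → ZMod 2)) ≃ (Fin (n+2) → ZMod 2) where
  toFun p := Fin.append p.1 p.2
  invFun x := (fun i => x (Fin.castAdd 2 i), fun j => x (Fin.natAdd n j))
  left_inv p := by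
    ext i
    · simp [Fin.append_left]
    · simp [Fin.append_right]
  right_inv x := by
    funext i
    cases i using Fin.addCases <;> simp [Fin.append_left, Fin.append_right]

lemma append_eta (n : ℕ) (x : Fin (n+2) → ZMod 2) :
    x = Fin.append (fun i => x (Fin.castAdd 2 i)) (fun j => x (Fin.natAdd n j)) :=
  ((ptE n).right_inv x).symm

lemma sum_split {M : Type*} [AddCommMonoid M] (n : ℕ) (F : (Fin (n+2) → ZMod 2) → M) :
    ∑ x : Fin (n+2) → ZMod 2, F x
      = ∑ z : Fin n → ZMod 2, ∑ b : Fin 2 → ZMod 2, F (Fin.append z b) := by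
  rw [← Equiv.sum_comp (ptE n) F, Fintype.sum_prod_type]
  rfl

lemma ip_split (n : ℕ) (z a : Fin n → ZMod 2) (b d : Fin 2 → ZMod 2) :
    ∑ i, Fin.append z b i * Fin.append a d i
      = (∑ i, z i * a i) + (b 0 * d 0 + b 1 * d 1) := by
  rw [Fin.sum_univ_add (f := fun i : Fin (n+2) => Fin.append z b i * Fin.append a d i)]
  simp [Fin.append_left, Fin.append_right, Fin.sum_univ_two]

lemma sign_add : ∀ (x y : ZMod 2), (-1:ℤ)^((x+y).val) = (-1:ℤ)^x.val * (-1:ℤ)^y.val := by decide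

lemma walsh_split (n : ℕ) (f : (Fin (n+2) → ZMod 2) → ZMod 2) (a : Fin n → ZMod 2)
    (d : Fin 2 → ZMod 2) :
    Wv (n+2) f (Fin.append a d) =
      Wv n (fun z => f (Fin.append z ![0,0])) a
      + (-1:ℤ)^((d 1).val) * Wv n (fun z => f (Fin.append z ![0,1])) a
      + (-1:ℤ)^((d 0).val) * Wv n (fun z => f (Fin.append z ![1,0])) a
      + (-1:ℤ)^((d 0 + d 1).val) * Wv n (fun z => f (Fin.append z ![1,1])) a := by
  have key : ∀ (b : Fin 2 → ZMod 2),
      (∑ z : Fin n → ZMod 2,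
        (-1:ℤ)^((f (Fin.append z b) + ∑ i, Fin.append z b i * Fin.append a d i).val))
      = (-1:ℤ)^((b 0 * d 0 + b 1 * d 1).val) * Wv n (fun z => f (Fin.append z b)) a := by
    intro b
    rw [Wv, Finset.mul_sum]
    refine Finset.sum_congr rfl fun z _ => ?_
    rw [ip_split, show f (Fin.append z b) + ((∑ i, z i * a i) + (b 0 * d 0 + b 1 * d 1))
        = (f (Fin.append z b) + ∑ i, z i * a i) + (b 0 * d 0 + b 1 * d 1) by ring,
      sign_add]
    ring
  rw [Wv, sum_split, Finset.sum_comm, sum_pi_fin2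
    (fun b => ∑ z : Fin n → ZMod 2,
      (-1:ℤ)^((f (Fin.append z b) + ∑ i, Fin.append z b i * Fin.append a d i).val)),
    key, key, key, key]
  norm_num

lemma pm_val : ∀ x : ZMod 2, (-1:ℤ)^x.val = 1 ∨ (-1:ℤ)^x.val = -1 := by decide

lemma pm_mul {x y : ℤ} (hx : x = 1 ∨ x = -1) (hy : y = 1 ∨ y = -1) :
    x * y = 1 ∨ x * y = -1 := by
  rcases hx with rfl | rfl <;> rcases hy with rfl | rfl <;> norm_num

lemma four_sum {e₁ e₂ e₃ e₄ : ℤ} (h₁ : e₁ = 1 ∨ e₁ = -1) (h₂ : e₂ = 1 ∨ e₂ = -1)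
    (h₃ : e₃ = 1 ∨ e₃ = -1) (h₄ : e₄ = 1 ∨ e₄ = -1) (hp : e₁ * e₂ * e₃ * e₄ = -1) :
    e₁ + e₂ + e₃ + e₄ = 2 ∨ e₁ + e₂ + e₃ + e₄ = -2 := by
  rcases h₁ with rfl | rfl <;> rcases h₂ with rfl | rfl <;> rcases h₃ with rfl | rfl <;>
    rcases h₄ with rfl | rfl <;> revert hp <;> norm_num

lemma four_prod {e₁ e₂ e₃ e₄ : ℤ} (h₁ : e₁ = 1 ∨ e₁ = -1) (h₂ : e₂ = 1 ∨ e₂ = -1)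
    (h₃ : e₃ = 1 ∨ e₃ = -1) (h₄ : e₄ = 1 ∨ e₄ = -1)
    (hs : e₁ + e₂ + e₃ + e₄ = 2 ∨ e₁ + e₂ + e₃ + e₄ = -2) :
    e₁ * e₂ * e₃ * e₄ = -1 := by
  rcases h₁ with rfl | rfl <;> rcases h₂ with rfl | rfl <;> rcases h₃ with rfl | rfl <;>
    rcases h₄ with rfl | rfl <;> revert hs <;> norm_num

lemma neg_one_pow_eq : ∀ w : ZMod 2, (-1:ℤ)^w.val = -1 → w = 1 := by decide

lemma zmod_sum4 : ∀ p q r t : ZMod 2, p + q + r + t = 1 ↔ p + q + r = t + 1 := by decide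

lemma four_b : ∀ b : Fin 2 → ZMod 2, b = ![0,0] ∨ b = ![0,1] ∨ b = ![1,0] ∨ b = ![1,1] := by
  decide

lemma four_B : ∀ B : Finset (Fin 2), B = ∅ ∨ B = {0} ∨ B = {1} ∨ B = Finset.univ := by decide

lemma prod4 : ∀ B : Finset (Fin 2),
    ((∏ j ∈ B, (![0,0] : Fin 2 → ZMod 2) j) + (∏ j ∈ B, (![0,1] : Fin 2 → ZMod 2) j)
      + (∏ j ∈ B, (![1,0] : Fin 2 → ZMod 2) j) + (∏ j ∈ B, (![1,1] : Fin 2 → ZMod 2) j))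
    = if B = Finset.univ then 1 else 0 := by decide


lemma bent_iff (n : ℕ)
    (f₁ f₂ f₃ f₄ : (Fin n → ZMod 2) → ZMod 2)
    (g₁ g₂ g₃ g₄ : (Fin n → ZMod 2) → ZMod 2)
    (hg₁ : ∀ a, Wv n f₁ a = 2 ^ (n / 2) * (-1 : ℤ) ^ ((g₁ a).val))
    (hg₂ : ∀ a, Wv n f₂ a = 2 ^ (n / 2) * (-1 : ℤ) ^ ((g₂ a).val))
    (hg₃ : ∀ a, Wv n f₃ a = 2 ^ (n / 2) * (-1 : ℤ) ^ ((g₃ a).val))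
    (hg₄ : ∀ a, Wv n f₄ a = 2 ^ (n / 2) * (-1 : ℤ) ^ ((g₄ a).val))
    (f : (Fin (n + 2) → ZMod 2) → ZMod 2)
    (hb1 : (fun z => f (Fin.append z ![0,0])) = f₁)
    (hb2 : (fun z => f (Fin.append z ![0,1])) = f₂)
    (hb3 : (fun z => f (Fin.append z ![1,0])) = f₃)
    (hb4 : (fun z => f (Fin.append z ![1,1])) = f₄) :
    IsBent (n + 2) f ↔ ∀ a, g₁ a + g₂ a + g₃ a = g₄ a + 1 := by
  have hp2 : (2:ℤ) ^ ((n+2)/2) = 2 ^ (n/2) * 2 := by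
    rw [show (n+2)/2 = n/2 + 1 from by omega, pow_succ]
  constructor
  · intro hbent a
    have h := hbent (Fin.append a ![0,0])
    rw [walsh_split, hb1, hb2, hb3, hb4, hg₁, hg₂, hg₃, hg₄, hp2] at h
    simp only [Matrix.cons_val_zero, Matrix.cons_val_one, Matrix.head_cons, add_zero,
      ZMod.val_zero, pow_zero, one_mul] at h
    have hsum : (-1:ℤ)^((g₁ a).val) + (-1:ℤ)^((g₂ a).val) + (-1:ℤ)^((g₃ a).val)
        + (-1:ℤ)^((g₄ a).val) = 2 ∨
        (-1:ℤ)^((g₁ a).val) + (-1:ℤ)^((g₂ a).val) + (-1:ℤ)^((g₃ a).val)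
        + (-1:ℤ)^((g₄ a).val) = -2 := by
      rcases h with h | h
      · left
        exact mul_left_cancel₀ (a := (2:ℤ)^(n/2)) (pow_ne_zero _ (by norm_num))
          (by linear_combination h)
      · right
        exact mul_left_cancel₀ (a := (2:ℤ)^(n/2)) (pow_ne_zero _ (by norm_num))
          (by linear_combination h)
    have hprod := four_prod (pm_val (g₁ a)) (pm_val (g₂ a)) (pm_val (g₃ a)) (pm_val (g₄ a)) hsum
    have h1 : g₁ a + g₂ a + g₃ a + g₄ a = 1 := by
      apply neg_one_pow_eq
      rw [sign_add, sign_add, sign_add]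
      exact hprod
    exact (zmod_sum4 _ _ _ _).mp h1
  · intro hcond α
    obtain ⟨a, d, rfl⟩ : ∃ a d, α = Fin.append a d := ⟨_, _, append_eta n α⟩
    rw [walsh_split, hb1, hb2, hb3, hb4, hg₁, hg₂, hg₃, hg₄, hp2]
    have hgsum : g₁ a + g₂ a + g₃ a + g₄ a = 1 := (zmod_sum4 _ _ _ _).mpr (hcond a)
    have hprod : (-1:ℤ)^((g₁ a).val) * (-1:ℤ)^((g₂ a).val) * (-1:ℤ)^((g₃ a).val)
        * (-1:ℤ)^((g₄ a).val) = -1 := by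
      rw [← sign_add, ← sign_add, ← sign_add, hgsum]
      decide
    have hprod' : (-1:ℤ)^((g₁ a).val) * ((-1:ℤ)^((d 1).val) * (-1:ℤ)^((g₂ a).val))
        * ((-1:ℤ)^((d 0).val) * (-1:ℤ)^((g₃ a).val))
        * ((-1:ℤ)^((d 0 + d 1).val) * (-1:ℤ)^((g₄ a).val)) = -1 := by
      rw [sign_add (d 0) (d 1)]
      rcases pm_val (d 0) with h0 | h0 <;> rcases pm_val (d 1) with h1 | h1 <;>
        rw [h0, h1] <;> linear_combination hprod
    have hsum := four_sum (pm_val (g₁ a))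
      (pm_mul (pm_val (d 1)) (pm_val (g₂ a)))
      (pm_mul (pm_val (d 0)) (pm_val (g₃ a)))
      (pm_mul (pm_val (d 0 + d 1)) (pm_val (g₄ a))) hprod'
    rcases hsum with h | h
    · left; linear_combination (2:ℤ)^(n/2) * h
    · right; linear_combination (2:ℤ)^(n/2) * h

lemma homog_fwd (n : ℕ)
    (f₁ q₂ q₃ s f₂ f₃ f₄ : (Fin n → ZMod 2) → ZMod 2)
    (hf₂ : ∀ z, f₂ z = f₁ z + q₂ z) (hf₃ : ∀ z, f₃ z = f₁ z + q₃ z)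
    (hf₄ : ∀ z, f₄ z = f₁ z + f₂ z + f₃ z + s z)
    (f : (Fin (n + 2) → ZMod 2) → ZMod 2)
    (hf : ∀ z : Fin n → ZMod 2,
      f (Fin.append z ![0, 0]) = f₁ z ∧ f (Fin.append z ![0, 1]) = f₂ z ∧
      f (Fin.append z ![1, 0]) = f₃ z ∧ f (Fin.append z ![1, 1]) = f₄ z)
    (hhom : IsHomog (n+2) 3 f) : IsHomog n 1 s := by
  obtain ⟨C, hC, hfC⟩ := hhom
  refine ⟨fun A => C (E n (A, Finset.univ)), ?_, ?_⟩
  · intro A hA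
    have := hC _ hA
    rw [E_card] at this
    have : A.card + 2 = 3 := by simpa using this
    omega
  · intro z
    have key : ∀ u v w t : ZMod 2, u + (u + v) + (u + w) + (u + (u + v) + (u + w) + t) = t := by
      decide
    have hsz : s z = f (Fin.append z ![0,0]) + f (Fin.append z ![0,1])
        + f (Fin.append z ![1,0]) + f (Fin.append z ![1,1]) := by
      rw [(hf z).1, (hf z).2.1, (hf z).2.2.1, (hf z).2.2.2, hf₄ z, hf₂ z, hf₃ z]
      exact (key (f₁ z) (q₂ z) (q₃ z) (s z)).symm
    rw [hsz, hfC, hfC, hfC, hfC, anf_split, anf_split, anf_split, anf_split,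
      ← Finset.sum_add_distrib, ← Finset.sum_add_distrib, ← Finset.sum_add_distrib, anf]
    refine Finset.sum_congr rfl fun A _ => ?_
    rw [← Finset.sum_add_distrib, ← Finset.sum_add_distrib, ← Finset.sum_add_distrib]
    have inner : ∀ B : Finset (Fin 2),
        C (E n (A,B)) * ((∏ i ∈ A, z i) * ∏ j ∈ B, (![0,0] : Fin 2 → ZMod 2) j)
        + C (E n (A,B)) * ((∏ i ∈ A, z i) * ∏ j ∈ B, (![0,1] : Fin 2 → ZMod 2) j)
        + C (E n (A,B)) * ((∏ i ∈ A, z i) * ∏ j ∈ B, (![1,0] : Fin 2 → ZMod 2) j)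
        + C (E n (A,B)) * ((∏ i ∈ A, z i) * ∏ j ∈ B, (![1,1] : Fin 2 → ZMod 2) j)
        = if B = Finset.univ then C (E n (A, Finset.univ)) * ∏ i ∈ A, z i else 0 := by
      intro B
      have : C (E n (A,B)) * ((∏ i ∈ A, z i) *
          ((∏ j ∈ B, (![0,0] : Fin 2 → ZMod 2) j) + (∏ j ∈ B, (![0,1] : Fin 2 → ZMod 2) j)
          + (∏ j ∈ B, (![1,0] : Fin 2 → ZMod 2) j) + (∏ j ∈ B, (![1,1] : Fin 2 → ZMod 2) j)))
          = if B = Finset.univ then C (E n (A, Finset.univ)) * ∏ i ∈ A, z i else 0 := by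
        rw [prod4]
        split_ifs with h
        · subst h; ring
        · ring
      rw [← this]; ring
    rw [Finset.sum_congr rfl fun B _ => inner B]
    simp

lemma homog_bwd (n : ℕ)
    (f₁ q₂ q₃ s f₂ f₃ f₄ : (Fin n → ZMod 2) → ZMod 2)
    (hhom₁ : IsHomog n 3 f₁) (hq₂ : IsHomog n 2 q₂) (hq₃ : IsHomog n 2 q₃)
    (hf₂ : ∀ z, f₂ z = f₁ z + q₂ z) (hf₃ : ∀ z, f₃ z = f₁ z + q₃ z)
    (hf₄ : ∀ z, f₄ z = f₁ z + f₂ z + f₃ z + s z)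
    (f : (Fin (n + 2) → ZMod 2) → ZMod 2)
    (hf : ∀ z : Fin n → ZMod 2,
      f (Fin.append z ![0, 0]) = f₁ z ∧ f (Fin.append z ![0, 1]) = f₂ z ∧
      f (Fin.append z ![1, 0]) = f₃ z ∧ f (Fin.append z ![1, 1]) = f₄ z)
    (hs : IsHomog n 1 s) : IsHomog (n+2) 3 f := by
  obtain ⟨c₁, hc₁, hv₁⟩ := hhom₁
  obtain ⟨c₂, hc₂, hv₂⟩ := hq₂
  obtain ⟨c₃, hc₃, hv₃⟩ := hq₃
  obtain ⟨cs, hcs, hvs⟩ := hs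
  refine ⟨fun S => if ((E n).symm S).2 = ∅ then c₁ ((E n).symm S).1
    else if ((E n).symm S).2 = {0} then c₃ ((E n).symm S).1
    else if ((E n).symm S).2 = {1} then c₂ ((E n).symm S).1
    else cs ((E n).symm S).1, ?_, ?_⟩
  all_goals {
    have hC : ∀ (A : Finset (Fin n)) (B : Finset (Fin 2)),
        (fun S => if ((E n).symm S).2 = ∅ then c₁ ((E n).symm S).1
          else if ((E n).symm S).2 = {0} then c₃ ((E n).symm S).1
          else if ((E n).symm S).2 = {1} then c₂ ((E n).symm S).1
          else cs ((E n).symm S).1) (E n (A, B))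
        = if B = ∅ then c₁ A else if B = {0} then c₃ A else if B = {1} then c₂ A else cs A := by
      intro A B
      simp only [Equiv.symm_apply_apply]
    first
    | -- degree goal
      ( intro S hS
        obtain ⟨A, B, rfl⟩ : ∃ A B, S = E n (A, B) :=
          ⟨((E n).symm S).1, ((E n).symm S).2, by
            rw [show (((E n).symm S).1, ((E n).symm S).2) = (E n).symm S from rfl,
              Equiv.apply_symm_apply]⟩
        rw [hC] at hS
        rw [E_card]
        rcases four_B B with rfl | rfl | rfl | rfl
        · rw [if_pos rfl] at hS
          simp [hc₁ _ hS]
        · rw [if_neg (by decide), if_pos rfl] at hS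
          simp [hc₃ _ hS]
        · rw [if_neg (by decide), if_neg (by decide), if_pos rfl] at hS
          simp [hc₂ _ hS]
        · rw [if_neg (by decide), if_neg (by decide), if_neg (by decide)] at hS
          simp [hcs _ hS] )
    | -- value goal
      ( intro x
        obtain ⟨z, b, rfl⟩ : ∃ z b, x = Fin.append z b := ⟨_, _, append_eta n x⟩
        have hstep : ∀ b : Fin 2 → ZMod 2,
            anf (n+2) (fun S => if ((E n).symm S).2 = ∅ then c₁ ((E n).symm S).1
              else if ((E n).symm S).2 = {0} then c₃ ((E n).symm S).1
              else if ((E n).symm S).2 = {1} then c₂ ((E n).symm S).1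
              else cs ((E n).symm S).1) (Fin.append z b)
            = ∑ A : Finset (Fin n),
                (c₁ A * ((∏ i ∈ A, z i) * ∏ j ∈ (∅ : Finset (Fin 2)), b j)
                + c₃ A * ((∏ i ∈ A, z i) * ∏ j ∈ ({0} : Finset (Fin 2)), b j)
                + c₂ A * ((∏ i ∈ A, z i) * ∏ j ∈ ({1} : Finset (Fin 2)), b j)
                + cs A * ((∏ i ∈ A, z i) * ∏ j ∈ (Finset.univ : Finset (Fin 2)), b j)) := by
          intro b
          rw [anf_split]
          refine Finset.sum_congr rfl fun A _ => ?_
          rw [sum_finset_fin2 (G := fun B => (fun S => if ((E n).symm S).2 = ∅ then c₁ ((E n).symm S).1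
              else if ((E n).symm S).2 = {0} then c₃ ((E n).symm S).1
              else if ((E n).symm S).2 = {1} then c₂ ((E n).symm S).1
              else cs ((E n).symm S).1) (E n (A, B)) * ((∏ i ∈ A, z i) * ∏ j ∈ B, b j))]
          rw [hC, hC, hC, hC, if_pos rfl, if_neg (by decide), if_pos rfl,
            if_neg (by decide), if_neg (by decide), if_pos rfl,
            if_neg (by decide), if_neg (by decide), if_neg (by decide)]
        rcases four_b b with rfl | rfl | rfl | rfl
        · rw [(hf z).1, hstep]
          have keyA : ∀ A : Finset (Fin n), (c₁ A * ((∏ i ∈ A, z i) * ∏ j ∈ (∅ : Finset (Fin 2)), (![0,0] : Fin 2 → ZMod 2) j)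
                + c₃ A * ((∏ i ∈ A, z i) * ∏ j ∈ ({0} : Finset (Fin 2)), (![0,0] : Fin 2 → ZMod 2) j)
                + c₂ A * ((∏ i ∈ A, z i) * ∏ j ∈ ({1} : Finset (Fin 2)), (![0,0] : Fin 2 → ZMod 2) j)
                + cs A * ((∏ i ∈ A, z i) * ∏ j ∈ (Finset.univ : Finset (Fin 2)), (![0,0] : Fin 2 → ZMod 2) j))
              = c₁ A * ∏ i ∈ A, z i := fun A => by
            rw [show (∏ j ∈ (∅ : Finset (Fin 2)), (![0,0] : Fin 2 → ZMod 2) j) = 1 by decide,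
              show (∏ j ∈ ({0} : Finset (Fin 2)), (![0,0] : Fin 2 → ZMod 2) j) = 0 by decide,
              show (∏ j ∈ ({1} : Finset (Fin 2)), (![0,0] : Fin 2 → ZMod 2) j) = 0 by decide,
              show (∏ j ∈ (Finset.univ : Finset (Fin 2)), (![0,0] : Fin 2 → ZMod 2) j) = 0 by decide]
            ring
          rw [Finset.sum_congr rfl fun A _ => keyA A]
          rw [hv₁ z, anf]
        · rw [(hf z).2.1, hstep]
          have keyA : ∀ A : Finset (Fin n), (c₁ A * ((∏ i ∈ A, z i) * ∏ j ∈ (∅ : Finset (Fin 2)), (![0,1] : Fin 2 → ZMod 2) j)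
                + c₃ A * ((∏ i ∈ A, z i) * ∏ j ∈ ({0} : Finset (Fin 2)), (![0,1] : Fin 2 → ZMod 2) j)
                + c₂ A * ((∏ i ∈ A, z i) * ∏ j ∈ ({1} : Finset (Fin 2)), (![0,1] : Fin 2 → ZMod 2) j)
                + cs A * ((∏ i ∈ A, z i) * ∏ j ∈ (Finset.univ : Finset (Fin 2)), (![0,1] : Fin 2 → ZMod 2) j))
              = c₁ A * ∏ i ∈ A, z i + c₂ A * ∏ i ∈ A, z i := fun A => by
            rw [show (∏ j ∈ (∅ : Finset (Fin 2)), (![0,1] : Fin 2 → ZMod 2) j) = 1 by decide,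
              show (∏ j ∈ ({0} : Finset (Fin 2)), (![0,1] : Fin 2 → ZMod 2) j) = 0 by decide,
              show (∏ j ∈ ({1} : Finset (Fin 2)), (![0,1] : Fin 2 → ZMod 2) j) = 1 by decide,
              show (∏ j ∈ (Finset.univ : Finset (Fin 2)), (![0,1] : Fin 2 → ZMod 2) j) = 0 by decide]
            ring
          rw [Finset.sum_congr rfl fun A _ => keyA A]
          rw [Finset.sum_add_distrib, hf₂ z, hv₁ z, hv₂ z, anf, anf]
        · rw [(hf z).2.2.1, hstep]
          have keyA : ∀ A : Finset (Fin n), (c₁ A * ((∏ i ∈ A, z i) * ∏ j ∈ (∅ : Finset (Fin 2)), (![1,0] : Fin 2 → ZMod 2) j)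
                + c₃ A * ((∏ i ∈ A, z i) * ∏ j ∈ ({0} : Finset (Fin 2)), (![1,0] : Fin 2 → ZMod 2) j)
                + c₂ A * ((∏ i ∈ A, z i) * ∏ j ∈ ({1} : Finset (Fin 2)), (![1,0] : Fin 2 → ZMod 2) j)
                + cs A * ((∏ i ∈ A, z i) * ∏ j ∈ (Finset.univ : Finset (Fin 2)), (![1,0] : Fin 2 → ZMod 2) j))
              = c₁ A * ∏ i ∈ A, z i + c₃ A * ∏ i ∈ A, z i := fun A => by
            rw [show (∏ j ∈ (∅ : Finset (Fin 2)), (![1,0] : Fin 2 → ZMod 2) j) = 1 by decide,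
              show (∏ j ∈ ({0} : Finset (Fin 2)), (![1,0] : Fin 2 → ZMod 2) j) = 1 by decide,
              show (∏ j ∈ ({1} : Finset (Fin 2)), (![1,0] : Fin 2 → ZMod 2) j) = 0 by decide,
              show (∏ j ∈ (Finset.univ : Finset (Fin 2)), (![1,0] : Fin 2 → ZMod 2) j) = 0 by decide]
            ring
          rw [Finset.sum_congr rfl fun A _ => keyA A]
          rw [Finset.sum_add_distrib, hf₃ z, hv₁ z, hv₃ z, anf, anf]
        · rw [(hf z).2.2.2, hstep]
          have keyA : ∀ A : Finset (Fin n), (c₁ A * ((∏ i ∈ A, z i) * ∏ j ∈ (∅ : Finset (Fin 2)), (![1,1] : Fin 2 → ZMod 2) j)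
                + c₃ A * ((∏ i ∈ A, z i) * ∏ j ∈ ({0} : Finset (Fin 2)), (![1,1] : Fin 2 → ZMod 2) j)
                + c₂ A * ((∏ i ∈ A, z i) * ∏ j ∈ ({1} : Finset (Fin 2)), (![1,1] : Fin 2 → ZMod 2) j)
                + cs A * ((∏ i ∈ A, z i) * ∏ j ∈ (Finset.univ : Finset (Fin 2)), (![1,1] : Fin 2 → ZMod 2) j))
              = c₁ A * ∏ i ∈ A, z i + c₃ A * ∏ i ∈ A, z i + c₂ A * ∏ i ∈ A, z i + cs A * ∏ i ∈ A, z i := fun A => by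
            rw [show (∏ j ∈ (∅ : Finset (Fin 2)), (![1,1] : Fin 2 → ZMod 2) j) = 1 by decide,
              show (∏ j ∈ ({0} : Finset (Fin 2)), (![1,1] : Fin 2 → ZMod 2) j) = 1 by decide,
              show (∏ j ∈ ({1} : Finset (Fin 2)), (![1,1] : Fin 2 → ZMod 2) j) = 1 by decide,
              show (∏ j ∈ (Finset.univ : Finset (Fin 2)), (![1,1] : Fin 2 → ZMod 2) j) = 1 by decide]
            ring
          rw [Finset.sum_congr rfl fun A _ => keyA A]
          rw [Finset.sum_add_distrib, Finset.sum_add_distrib, Finset.sum_add_distrib,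
            hf₄ z, hf₂ z, hf₃ z, hv₁ z, hv₂ z, hv₃ z, hvs z, anf, anf, anf, anf]
          have : ∀ u v w t : ZMod 2, u + (u + v) + (u + w) + t = u + w + v + t := by decide
          exact this _ _ _ _ )
  }

end Stmt13Aux

open Stmt13Aux in
/-- the concatenation `f₁‖f₂‖f₃‖f₄` with `f₂ = f₁+q₂`, `f₃ = f₁+q₃`,
`f₄ = f₁+f₂+f₃+s` is homogeneous cubic bent iff `s` is linear and
`f₁* + f₂* + f₃* = (f₁+f₂+f₃+s)* + 1`. -/
theorem stmt_13 (n : ℕ) (hn : Even n)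
    (f₁ q₂ q₃ s f₂ f₃ f₄ : (Fin n → ZMod 2) → ZMod 2)
    (hhom₁ : IsHomog n 3 f₁) (hbent₁ : IsBent n f₁)
    (hq₂ : IsHomog n 2 q₂) (hq₃ : IsHomog n 2 q₃)
    (hf₂ : ∀ z, f₂ z = f₁ z + q₂ z) (hf₃ : ∀ z, f₃ z = f₁ z + q₃ z)
    (hbent₂ : IsBent n f₂) (hbent₃ : IsBent n f₃)
    (hbent₁₂₃ : IsBent n (fun z => f₁ z + f₂ z + f₃ z))
    (hf₄ : ∀ z, f₄ z = f₁ z + f₂ z + f₃ z + s z)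
    (g₁ g₂ g₃ g₄ : (Fin n → ZMod 2) → ZMod 2)
    (hg₁ : ∀ a, Wv n f₁ a = 2 ^ (n / 2) * (-1 : ℤ) ^ ((g₁ a).val))
    (hg₂ : ∀ a, Wv n f₂ a = 2 ^ (n / 2) * (-1 : ℤ) ^ ((g₂ a).val))
    (hg₃ : ∀ a, Wv n f₃ a = 2 ^ (n / 2) * (-1 : ℤ) ^ ((g₃ a).val))
    (hg₄ : ∀ a, Wv n f₄ a = 2 ^ (n / 2) * (-1 : ℤ) ^ ((g₄ a).val))
    (f : (Fin (n + 2) → ZMod 2) → ZMod 2)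
    (hf : ∀ z : Fin n → ZMod 2,
      f (Fin.append z ![0, 0]) = f₁ z ∧ f (Fin.append z ![0, 1]) = f₂ z ∧
      f (Fin.append z ![1, 0]) = f₃ z ∧ f (Fin.append z ![1, 1]) = f₄ z) :
    (IsBent (n + 2) f ∧ IsHomog (n + 2) 3 f) ↔
      (IsHomog n 1 s ∧ ∀ a, g₁ a + g₂ a + g₃ a = g₄ a + 1) := by
  have hb1 : (fun z => f (Fin.append z ![0,0])) = f₁ := funext fun z => (hf z).1
  have hb2 : (fun z => f (Fin.append z ![0,1])) = f₂ := funext fun z => (hf z).2.1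
  have hb3 : (fun z => f (Fin.append z ![1,0])) = f₃ := funext fun z => (hf z).2.2.1
  have hb4 : (fun z => f (Fin.append z ![1,1])) = f₄ := funext fun z => (hf z).2.2.2
  have hbiff := bent_iff n f₁ f₂ f₃ f₄ g₁ g₂ g₃ g₄ hg₁ hg₂ hg₃ hg₄ f hb1 hb2 hb3 hb4
  constructor
  · rintro ⟨hb, hh⟩
    exact ⟨homog_fwd n f₁ q₂ q₃ s f₂ f₃ f₄ hf₂ hf₃ hf₄ f hf hh, hbiff.mp hb⟩
  · rintro ⟨hhs, hcond⟩
    exact ⟨hbiff.mpr hcond, homog_bwd n f₁ q₂ q₃ s f₂ f₃ f₄ hhom₁ hq₂ hq₃ hf₂ hf₃ hf₄ f hf hhs⟩
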